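/- arXiv:1709.01538 — 5 statements merged into one kernel-verified Lean document; each statement's English description precedes it below -/
import Mathlib

section
/- Let F be a path connected topological field and X a compact Hausdorff space. Then the image of the Gelfand map I_F : X → Max(C(X,F)) is a Hausdorff subspace of Max(C(X,F)) with the Zariski topology. -/
/-- The Zariski topology on the maximal spectrum, induced from the prime spectrum. -/
instance (R : Type*) [CommRing R] : TopologicalSpace (MaximalSpectrum R) :=
  TopologicalSpace.induced MaximalSpectrum.toPrimeSpectrum inferInstance

/-- Evaluation at a point as a ring homomorphism on the ring of continuous functions. -/
def evalHom (X F : Type*) [TopologicalSpace X] [TopologicalSpace F] [CommRing F]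
    [IsTopologicalRing F] (x : X) : C(X, F) →+* F where
  toFun f := f x
  map_one' := rfl
  map_mul' _ _ := rfl
  map_zero' := rfl
  map_add' _ _ := rfl

/-- The Gelfand map, sending a point to the maximal ideal of functions vanishing at it. -/
def gelfandMap (X F : Type*) [TopologicalSpace X] [Field F] [TopologicalSpace F]
    [IsTopologicalRing F] : X → MaximalSpectrum C(X, F) := fun x =>
  ⟨RingHom.ker (evalHom X F x),
    RingHom.ker_isMaximal_of_surjective _ fun a => ⟨ContinuousMap.const X a, rfl⟩⟩

/-!
Distinct points `x ≠ y` of `X` have disjoint neighbourhoods `U ∋ x`, `V ∋ y`. Since a compact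
Hausdorff space is completely regular, composing Urysohn functions `X → [0, 1]` with a path from
`1` to `0` in `F` gives `f, g ∈ C(X, F)` with `f x = g y = 1` and `f g = 0`. As maximal ideals are
prime, the Zariski basic open sets `D(f)` and `D(g)` are disjoint, and they contain the ideals of
`x` and `y` respectively.
-/

lemma CompletelyRegularSpace.exists_continuousMap_eq_of_notMem {X Y : Type*}
    [TopologicalSpace X] [CompletelyRegularSpace X] [TopologicalSpace Y] [PathConnectedSpace Y]
    {x : X} {U : Set X} (hU : IsOpen U) (hx : x ∈ U) (a b : Y) :
    ∃ h : C(X, Y), h x = a ∧ ∀ z ∉ U, h z = b := by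
  obtain ⟨φ, hφ, hφx, hφU⟩ := completely_regular_isOpen x U hU hx
  let γ := PathConnectedSpace.somePath a b
  exact ⟨⟨γ ∘ φ, γ.continuous.comp hφ⟩, by simp [hφx], fun z hz => by simp [hφU hz]⟩

lemma PrimeSpectrum.disjoint_basicOpen_of_mul_eq_zero {R : Type*} [CommSemiring R] {f g : R}
    (h : f * g = 0) : Disjoint (basicOpen f : Set (PrimeSpectrum R)) (basicOpen g) := by
  rw [Set.disjoint_iff_inter_eq_empty, ← TopologicalSpace.Opens.coe_inf, ← basicOpen_mul, h,
    basicOpen_zero, TopologicalSpace.Opens.coe_bot]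

lemma MaximalSpectrum.t2Space_of_exists_mul_eq_zero {R : Type*} [CommRing R]
    {S : Set (MaximalSpectrum R)}
    (hS : ∀ M ∈ S, ∀ N ∈ S, M ≠ N → ∃ f g : R, f ∉ M.asIdeal ∧ g ∉ N.asIdeal ∧ f * g = 0) :
    T2Space S := by
  refine ⟨fun M N hMN => ?_⟩
  obtain ⟨f, g, hf, hg, hfg⟩ := hS M M.2 N N.2 (Subtype.coe_injective.ne hMN)
  have hcont : Continuous fun P : S => toPrimeSpectrum P.1 :=
    (continuous_induced_dom (f := toPrimeSpectrum)).comp continuous_subtype_val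
  exact ⟨_, _, (PrimeSpectrum.isOpen_basicOpen (a := f)).preimage hcont,
    (PrimeSpectrum.isOpen_basicOpen (a := g)).preimage hcont, hf, hg,
    (PrimeSpectrum.disjoint_basicOpen_of_mul_eq_zero hfg).preimage _⟩

lemma mem_gelfandMap_asIdeal {X F : Type*} [TopologicalSpace X] [Field F] [TopologicalSpace F]
    [IsTopologicalRing F] {x : X} {f : C(X, F)} : f ∈ (gelfandMap X F x).asIdeal ↔ f x = 0 :=
  Iff.rfl

theorem stmt_8_general (F X : Type*) [Field F] [TopologicalSpace F] [IsTopologicalDivisionRing F]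
    [PathConnectedSpace F] [TopologicalSpace X] [CompactSpace X] [T2Space X] :
    T2Space (Set.range (gelfandMap X F)) := by
  refine MaximalSpectrum.t2Space_of_exists_mul_eq_zero ?_
  rintro _ ⟨x, rfl⟩ _ ⟨y, rfl⟩ hxy
  obtain ⟨U, V, hU, hV, hxU, hyV, hUV⟩ := t2_separation (ne_of_apply_ne _ hxy)
  obtain ⟨f, hfx, hfU⟩ :=
    CompletelyRegularSpace.exists_continuousMap_eq_of_notMem hU hxU (1 : F) 0
  obtain ⟨g, hgy, hgV⟩ :=
    CompletelyRegularSpace.exists_continuousMap_eq_of_notMem hV hyV (1 : F) 0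
  refine ⟨f, g, by simp [mem_gelfandMap_asIdeal, hfx], by simp [mem_gelfandMap_asIdeal, hgy], ?_⟩
  ext z
  by_cases hz : z ∈ U
  · simp [hgV z (hUV.notMem_of_mem_left hz)]
  · simp [hfU z hz]

theorem stmt_8 (F X : Type*) [Field F] [TopologicalSpace F] [IsTopologicalDivisionRing F]
    [T1Space F] [PathConnectedSpace F] [TopologicalSpace X] [CompactSpace X] [T2Space X] :
    T2Space (Set.range (gelfandMap X F)) :=
  stmt_8_general F X
end

section
/- Let F be a topological field that is not locally compact, and let Y be a compact space with continuous functions ψ₁, ψ₂ : Y → F that have no common zero. Then there exists a ∈ F such that ψ₁(x) − a·ψ₂(x) ≠ 0 for all x ∈ Y. -/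
/-!
Suppose, for contradiction, that every `a : F` satisfies `ψ₁ x = a * ψ₂ x` for some `x`.
Take an open neighbourhood `N` of `0` with `1 ∉ N * N`. The open set `O` of points where
`ψ₁ ≠ 0` and `ψ₂ / ψ₁ ∈ N` contains every zero of `ψ₂`, so `ψ₁ / ψ₂` is continuous on the
compact set `Oᶜ`. Its image is compact and contains `N`: a solution `x` of `ψ₁ x = a * ψ₂ x` with
`a ∈ N` cannot lie in `O`, since there `a * (ψ₂ x / ψ₁ x) = 1`. So `0` has a compact
neighbourhood and `F` is locally compact.
-/

open Filter Topology

lemma exists_isOpen_zero_mem_forall_mul_ne_one (M : Type*) [MulZeroOneClass M] [NeZero (1 : M)]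
    [TopologicalSpace M] [ContinuousMul M] [T1Space M] :
    ∃ N : Set M, IsOpen N ∧ (0 : M) ∈ N ∧ ∀ a ∈ N, ∀ b ∈ N, a * b ≠ 1 := by
  have hmul : ∀ᶠ p : M × M in 𝓝 0 ×ˢ 𝓝 0, p.1 * p.2 ≠ 1 := by
    rw [← nhds_prod_eq]
    refine (continuous_mul.tendsto ((0 : M), (0 : M))).eventually_ne ?_
    simp
  obtain ⟨N, ⟨hN0, hNo⟩, hN⟩ := (nhds_basis_opens (0 : M)).prod_self.eventually_iff.1 hmul
  exact ⟨N, hNo, hN0, fun a ha b hb => hN (Set.mk_mem_prod ha hb)⟩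

section Ratio

variable {F Y : Type*} [Field F] [TopologicalSpace F] [TopologicalSpace Y]
  (ψ₁ ψ₂ : C(Y, F)) (N : Set F)

/-- The points where `[ψ₁ : ψ₂]` lies in the neighbourhood `{[1 : b] | b ∈ N}` of `∞`. -/
def nearInfinity : Set Y := {x | ψ₁ x ≠ 0 ∧ ψ₂ x / ψ₁ x ∈ N}

variable {ψ₁ ψ₂ N}

lemma isOpen_nearInfinity [IsTopologicalDivisionRing F] [T1Space F] (hN : IsOpen N) :
    IsOpen (nearInfinity ψ₁ ψ₂ N) :=
  (ψ₂.continuous.continuousOn.div ψ₁.continuous.continuousOn fun _ hx => hx).isOpen_inter_preimage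
    (isOpen_compl_singleton.preimage ψ₁.continuous) hN

lemma ne_zero_of_notMem_nearInfinity (h : ∀ x, ψ₁ x ≠ 0 ∨ ψ₂ x ≠ 0) (hN0 : (0 : F) ∈ N) {x : Y}
    (hx : x ∉ nearInfinity ψ₁ ψ₂ N) : ψ₂ x ≠ 0 := by
  intro h₂
  exact hx ⟨(h x).resolve_right (not_not.2 h₂), by simpa [h₂] using hN0⟩

lemma isCompact_image_div_compl_nearInfinity [IsTopologicalDivisionRing F] [T1Space F]
    [CompactSpace Y] (h : ∀ x, ψ₁ x ≠ 0 ∨ ψ₂ x ≠ 0) (hN : IsOpen N) (hN0 : (0 : F) ∈ N) :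
    IsCompact ((fun x => ψ₁ x / ψ₂ x) '' (nearInfinity ψ₁ ψ₂ N)ᶜ) :=
  (isOpen_nearInfinity hN).isClosed_compl.isCompact.image_of_continuousOn <|
    ψ₁.continuous.continuousOn.div ψ₂.continuous.continuousOn fun _ hx =>
      ne_zero_of_notMem_nearInfinity h hN0 hx

lemma mem_image_div_compl_nearInfinity (h : ∀ x, ψ₁ x ≠ 0 ∨ ψ₂ x ≠ 0)
    (hN : ∀ a ∈ N, ∀ b ∈ N, a * b ≠ 1) {a : F} (ha : a ∈ N) {x : Y} (hx : ψ₁ x = a * ψ₂ x) :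
    a ∈ (fun x => ψ₁ x / ψ₂ x) '' (nearInfinity ψ₁ ψ₂ N)ᶜ := by
  have h₂ : ψ₂ x ≠ 0 := fun h₂ => by simpa [h₂, hx] using h x
  refine ⟨x, fun ⟨h₁, hb⟩ => hN a ha _ hb ?_, by simp [hx, h₂]⟩
  rw [hx, mul_div_assoc', div_self (hx ▸ h₁)]

end Ratio

theorem stmt_13 (F Y : Type*) [Field F] [TopologicalSpace F] [IsTopologicalDivisionRing F]
    [T1Space F] (hF : ¬LocallyCompactSpace F) [TopologicalSpace Y] [CompactSpace Y]
    (ψ₁ ψ₂ : C(Y, F)) (h : ∀ x : Y, ψ₁ x ≠ 0 ∨ ψ₂ x ≠ 0) :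
    ∃ a : F, ∀ x : Y, ψ₁ x - a * ψ₂ x ≠ 0 := by
  by_contra! hcon
  obtain ⟨N, hNo, hN0, hN⟩ := exists_isOpen_zero_mem_forall_mul_ne_one F
  have hNK : N ⊆ (fun x => ψ₁ x / ψ₂ x) '' (nearInfinity ψ₁ ψ₂ N)ᶜ := fun a ha =>
    have ⟨x, hx⟩ := hcon a
    mem_image_div_compl_nearInfinity h hN ha (sub_eq_zero.1 hx)
  have hK := isCompact_image_div_compl_nearInfinity h hNo hN0
  exact hF (hK.locallyCompactSpace_of_mem_nhds_of_addGroup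
    (mem_of_superset (hNo.mem_nhds hN0) hNK))
end

section
/- Let X be a compact Hausdorff space, F a non-algebraically-closed field carrying any field topology, and M a maximal ideal of C(X,F) containing functions ψ₁,...,ψₙ with no common zero on X. Then M = C(X,F) (i.e., no proper ideal of C(X,F) can contain functions without a common zero, given a polynomial over F vanishing only at the origin). -/
/-!
Since `F` is not algebraically closed, some polynomial `p` of positive degree has no root, and
its homogenization `q(a, b)` vanishes only at `(0, 0)`. Nesting `q` as
`fₙ₊₁(x, y) = q(fₙ(x), y)` gives, for every `n`, a polynomial `fₙ` in `n` variables without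
constant term whose only zero is the origin. Then `fₙ(ψ₁, …, ψₙ)` lies in `M` and vanishes nowhere on `X`, so it is a unit of `C(X, F)`.
-/

open MvPolynomial

namespace MvPolynomial

section Ideal

variable {σ R A : Type*} [CommSemiring R] [CommSemiring A] [Algebra R A]

theorem aeval_mem_of_mem_span_range_X {f : MvPolynomial σ R}
    (hf : f ∈ Ideal.span (Set.range X)) {I : Ideal A} {a : σ → A} (ha : ∀ i, a i ∈ I) :
    aeval a f ∈ I := by
  have hmap : Ideal.map (aeval a) (Ideal.span (Set.range (X : σ → MvPolynomial σ R))) ≤ I := by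
    rw [Ideal.map_span, ← Set.range_comp, Ideal.span_le]
    rintro _ ⟨i, rfl⟩
    simpa using ha i
  exact hmap (Ideal.mem_map_of_mem _ hf)

theorem rename_mem_span_range_X {τ : Type*} {f : MvPolynomial σ R}
    (hf : f ∈ Ideal.span (Set.range X)) (g : σ → τ) :
    rename g f ∈ Ideal.span (Set.range (X : τ → MvPolynomial τ R)) := by
  rw [rename_eq_aeval]
  exact aeval_mem_of_mem_span_range_X hf fun i => Ideal.subset_span ⟨g i, rfl⟩

theorem IsHomogeneous.mem_span_range_X {f : MvPolynomial σ R} {n : ℕ} (hf : f.IsHomogeneous n)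
    (hn : n ≠ 0) : f ∈ Ideal.span (Set.range X) := by
  rw [← Set.image_univ, mem_ideal_span_X_image]
  intro m hm
  have hm0 : m ≠ 0 := by
    rintro rfl
    exact hn (hf (mem_support_iff.mp hm)).symm
  obtain ⟨i, hi⟩ := Finsupp.ne_iff.mp hm0
  exact ⟨i, Set.mem_univ i, hi⟩

end Ideal

theorem eval_bind₁ {σ τ R : Type*} [CommSemiring R] (x : τ → R) (g : σ → MvPolynomial τ R)
    (φ : MvPolynomial σ R) : eval x (bind₁ g φ) = eval (fun i => eval x (g i)) φ :=
  eval₂Hom_bind₁ _ _ _ _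

theorem aeval_continuousMap_apply {σ X R : Type*} [CommSemiring R] [TopologicalSpace R]
    [IsTopologicalSemiring R] [TopologicalSpace X] (ψ : σ → C(X, R)) (f : MvPolynomial σ R)
    (x : X) : aeval ψ f x = eval (fun i => ψ i x) f := by
  rw [← ContinuousMap.evalAlgHom_apply R, comp_aeval_apply]
  rfl

def Anisotropic {σ K : Type*} [Field K] (f : MvPolynomial σ K) : Prop :=
  ∀ x, eval x f = 0 → x = 0

end MvPolynomial

namespace Polynomial

theorem eval_homogenize_of_eq_zero {R : Type*} [CommSemiring R] (p : R[X]) (n : ℕ)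
    {x : Fin 2 → R} (hx : x 1 = 0) :
    MvPolynomial.eval x (p.homogenize n) = p.coeff n * x 0 ^ n := by
  rw [homogenize, map_sum, Finset.sum_eq_single (n, 0)]
  · simp [MvPolynomial.eval_monomial, Finsupp.prod_fintype, Fin.prod_univ_two]
  · rintro ⟨k, l⟩ hkl hne
    have hl : l ≠ 0 := by
      rintro rfl
      simp_all
    simp [MvPolynomial.eval_monomial, Finsupp.prod_fintype, Fin.prod_univ_two, hx, hl]
  · simp

theorem anisotropic_homogenize {K : Type*} [Field K] {p : K[X]} (hp : ∀ a, ¬p.IsRoot a) :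
    (p.homogenize p.natDegree).Anisotropic := by
  intro x hx
  have hp0 : p ≠ 0 := by
    rintro rfl
    exact hp 0 (by simp)
  by_cases hx1 : x 1 = 0
  · rw [eval_homogenize_of_eq_zero _ _ hx1, coeff_natDegree, mul_eq_zero] at hx
    have hx0 : x 0 = 0 :=
      eq_zero_of_pow_eq_zero (hx.resolve_left (leadingCoeff_ne_zero.mpr hp0))
    ext i
    fin_cases i <;> simp [hx0, hx1]
  · rw [eval_homogenize le_rfl _ hx1, mul_eq_zero] at hx
    rcases hx with hroot | hpow
    · exact (hp _ hroot).elim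
    · exact (hx1 (eq_zero_of_pow_eq_zero hpow)).elim

end Polynomial

namespace MvPolynomial

variable {K : Type*} [Field K]

theorem Anisotropic.bind₁_rename_castSucc {n : ℕ} {q : MvPolynomial (Fin 2) K}
    {f : MvPolynomial (Fin n) K} (hq : q.Anisotropic) (hf : f.Anisotropic) :
    (bind₁ ![rename Fin.castSucc f, X (Fin.last n)] q).Anisotropic := by
  intro x hx
  rw [eval_bind₁] at hx
  have hx' := hq _ hx
  have hinit : x ∘ Fin.castSucc = 0 := hf _ (by simpa [eval_rename] using congrFun hx' 0)
  have hlast : x (Fin.last n) = 0 := by simpa using congrFun hx' 1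
  ext i
  induction i using Fin.lastCases with
  | last => exact hlast
  | cast j => exact congrFun hinit j

theorem exists_anisotropic_mem_span_range_X (hK : ¬IsAlgClosed K) (n : ℕ) :
    ∃ f : MvPolynomial (Fin n) K, f ∈ Ideal.span (Set.range X) ∧ f.Anisotropic := by
  obtain ⟨p, -, hp_irr, hp_root⟩ :
      ∃ p : Polynomial K, p.Monic ∧ Irreducible p ∧ ∀ a, ¬p.IsRoot a := by
    contrapose! hK
    exact IsAlgClosed.of_exists_root K hK
  set q := p.homogenize p.natDegree
  have hq_mem : q ∈ Ideal.span (Set.range X) :=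
    (Polynomial.isHomogeneous_homogenize p).mem_span_range_X hp_irr.natDegree_pos.ne'
  have hq : q.Anisotropic := Polynomial.anisotropic_homogenize hp_root
  induction n with
  | zero => exact ⟨0, Ideal.zero_mem _, fun x _ => Subsingleton.elim x 0⟩
  | succ n ih =>
    obtain ⟨f, hf_mem, hf⟩ := ih
    refine ⟨_, aeval_mem_of_mem_span_range_X hq_mem (Fin.forall_fin_two.mpr ⟨?_, ?_⟩),
      hq.bind₁_rename_castSucc hf⟩
    · exact rename_mem_span_range_X hf_mem _
    · exact Ideal.subset_span (Set.mem_range_self _)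

end MvPolynomial

theorem ContinuousMap.isUnit_of_forall_ne_zero {X K : Type*} [TopologicalSpace X]
    [TopologicalSpace K] [GroupWithZero K] [ContinuousMul K] [ContinuousInv₀ K]
    {f : C(X, K)} (hf : ∀ x, f x ≠ 0) : IsUnit f :=
  isUnit_iff_exists.mpr ⟨⟨fun x => (f x)⁻¹, f.continuous.inv₀ hf⟩,
    by ext x; exact mul_inv_cancel₀ (hf x), by ext x; exact inv_mul_cancel₀ (hf x)⟩

theorem stmt_16_general (F X : Type*) [Field F] [TopologicalSpace F] [IsTopologicalDivisionRing F]
    (hF : ¬IsAlgClosed F) [TopologicalSpace X]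
    (M : Ideal C(X, F)) (n : ℕ) (ψ : Fin n → C(X, F))
    (hmem : ∀ i, ψ i ∈ M) (h : ∀ x : X, ∃ i, ψ i x ≠ 0) :
    M = ⊤ := by
  obtain ⟨f, hf_mem, hf⟩ := exists_anisotropic_mem_span_range_X hF n
  refine M.eq_top_of_isUnit_mem (aeval_mem_of_mem_span_range_X hf_mem hmem)
    (ContinuousMap.isUnit_of_forall_ne_zero fun x hx => ?_)
  obtain ⟨i, hi⟩ := h x
  rw [aeval_continuousMap_apply] at hx
  exact hi (congrFun (hf _ hx) i)

theorem stmt_16 (F X : Type*) [Field F] [TopologicalSpace F] [IsTopologicalDivisionRing F]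
    [T1Space F] (hF : ¬IsAlgClosed F) [TopologicalSpace X] [CompactSpace X] [T2Space X]
    (M : Ideal C(X, F)) (hM : M.IsMaximal) (n : ℕ) (ψ : Fin n → C(X, F))
    (hmem : ∀ i, ψ i ∈ M) (h : ∀ x : X, ∃ i, ψ i x ≠ 0) :
    M = ⊤ :=
  stmt_16_general F X hF M n ψ hmem h
end

section
/- Let F be a path connected metrizable topological field. Then for every positive integer n there is a continuous function f_n : Fⁿ → F whose zero set is exactly the origin: f_n(v) = 0 if and only if v = (0,...,0). -/
/-!
Pick a point `y ≠ 0` and a path `γ` from `0` to `y`, and let `t₀` be the last time `γ` visits `0`.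
After `t₀` the path never returns to `0`, so feeding the (truncated) distance to the origin into
`γ` restricted to `[t₀, 1]` gives a continuous function vanishing exactly at the origin.
-/

open Set

theorem exists_continuous_real_eq_iff_eq_zero {X : Type*} [TopologicalSpace X] [T1Space X]
    [PathConnectedSpace X] [Nontrivial X] (x : X) :
    ∃ g : ℝ → X, Continuous g ∧ ∀ t, 0 ≤ t → (g t = x ↔ t = 0) := by
  obtain ⟨y, hyx⟩ := exists_ne x
  obtain ⟨γ⟩ : Nonempty (Path x y) := PathConnectedSpace.joined x y
  let S : Set ℝ := Icc 0 1 ∩ γ.extend ⁻¹' {x}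
  have hS : IsCompact S :=
    isCompact_Icc.inter_right (isClosed_singleton.preimage γ.continuous_extend)
  obtain ⟨t₀, ⟨⟨ht₀_nonneg, ht₀_le_one⟩, hγt₀⟩, ht₀_max⟩ :=
    hS.exists_isGreatest ⟨0, ⟨left_mem_Icc.2 zero_le_one, by simp⟩⟩
  have ht₀_lt_one : t₀ < 1 := by
    refine ht₀_le_one.lt_of_ne fun h => hyx ?_
    rw [← γ.extend_one, ← h]
    exact hγt₀
  have last_visit : ∀ t, t₀ < t → t ≤ 1 → γ.extend t ≠ x := fun t ht₀t ht1 hγt =>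
    (ht₀_max ⟨⟨ht₀_nonneg.trans ht₀t.le, ht1⟩, hγt⟩).not_gt ht₀t
  refine ⟨fun t => γ.extend (t₀ + (1 - t₀) * min 1 t), by fun_prop, fun t ht => ⟨?_, ?_⟩⟩
  · intro hγt
    by_contra ht0
    have hmin : 0 < min 1 t := lt_min one_pos (ht.lt_of_ne' ht0)
    refine last_visit _ ?_ ?_ hγt
    · nlinarith
    · nlinarith [min_le_left 1 t]
  · rintro rfl
    simpa using hγt₀

theorem exists_continuous_eq_iff_eq {X Y : Type*} [TopologicalSpace X] [T1Space X]
    [PathConnectedSpace X] [Nontrivial X] [TopologicalSpace Y] [TopologicalSpace.MetrizableSpace Y]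
    (x : X) (y₀ : Y) :
    ∃ f : Y → X, Continuous f ∧ ∀ y, f y = x ↔ y = y₀ := by
  let : MetricSpace Y := TopologicalSpace.metrizableSpaceMetric Y
  obtain ⟨g, hg, hg_eq⟩ := exists_continuous_real_eq_iff_eq_zero x
  exact ⟨fun y => g (dist y y₀), hg.comp (continuous_id.dist continuous_const),
    fun y => (hg_eq _ dist_nonneg).trans dist_eq_zero⟩

theorem stmt_17_general (F : Type*) [Field F] [TopologicalSpace F]
    [PathConnectedSpace F] [TopologicalSpace.MetrizableSpace F]
    (n : ℕ) :
    ∃ f : (Fin n → F) → F, Continuous f ∧ ∀ v : Fin n → F, f v = 0 ↔ v = 0 :=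
  exists_continuous_eq_iff_eq 0 0

theorem stmt_17 (F : Type*) [Field F] [TopologicalSpace F] [IsTopologicalDivisionRing F]
    [T1Space F] [PathConnectedSpace F] [TopologicalSpace.MetrizableSpace F]
    (n : ℕ) (hn : 0 < n) :
    ∃ f : (Fin n → F) → F, Continuous f ∧ ∀ v : Fin n → F, f v = 0 ↔ v = 0 :=
  stmt_17_general F n
end

section
/- Let X be a nonempty compact Hausdorff topological space. Then the map I : X → Max(C(X,ℝ)) sending x₀ to the maximal ideal {f ∈ C(X,ℝ) : f(x₀) = 0} is a homeomorphism, where Max(C(X,ℝ)) carries the Zariski topology. -/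
/-!
A point `x` corresponds to the ideal `idealOfSet {x}ᶜ` of functions vanishing at `x`, and the
Zariski-closed set cut out by an ideal `I` pulls back to the common zero set of `I`, the complement
of `setOfIdeal I`. By Urysohn's lemma every open set `s` equals `setOfIdeal (idealOfSet s)`, which
gives injectivity and closedness of the map; maximal ideals of the Banach algebra `C(X, 𝕜)` are
closed, hence all of the form `idealOfSet {x}ᶜ`, which gives surjectivity.
-/

open ContinuousMap PrimeSpectrum

section Field

variable {X F : Type*} [TopologicalSpace X] [Field F] [TopologicalSpace F] [IsTopologicalRing F]

lemma gelfandMap_asIdeal (x : X) :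
    (gelfandMap X F x).asIdeal = idealOfSet F {x}ᶜ := by
  ext f
  rw [mem_idealOfSet_compl_singleton]
  rfl

lemma gelfandMap_preimage_zeroLocus (I : Ideal C(X, F)) :
    (MaximalSpectrum.toPrimeSpectrum ∘ gelfandMap X F) ⁻¹' zeroLocus I = (setOfIdeal I)ᶜ := by
  ext x
  change (I : Set C(X, F)) ⊆ (gelfandMap X F x).asIdeal ↔ x ∉ setOfIdeal I
  rw [gelfandMap_asIdeal, SetLike.coe_subset_coe, ← ideal_gc, Set.subset_compl_singleton_iff]

lemma continuous_gelfandMap [T2Space F] : Continuous (gelfandMap X F) := by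
  rw [continuous_induced_rng, continuous_iff_isClosed]
  intro Z hZ
  obtain ⟨I, rfl⟩ := (isClosed_iff_zeroLocus_ideal Z).mp hZ
  rw [gelfandMap_preimage_zeroLocus, isClosed_compl_iff]
  exact setOfIdeal_open I

end Field

section RCLike

variable {X 𝕜 : Type*} [TopologicalSpace X] [CompactSpace X] [T2Space X] [RCLike 𝕜]

lemma gelfandMap_injective : Function.Injective (gelfandMap X 𝕜) := by
  intro x y hxy
  have hideal : idealOfSet 𝕜 ({x}ᶜ : Set X) = idealOfSet 𝕜 {y}ᶜ := by
    rw [← gelfandMap_asIdeal, ← gelfandMap_asIdeal, hxy]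
  have hcompl := congrArg setOfIdeal hideal
  rwa [setOfIdeal_ofSet_of_isOpen 𝕜 isOpen_compl_singleton,
    setOfIdeal_ofSet_of_isOpen 𝕜 isOpen_compl_singleton, compl_inj_iff,
    Set.singleton_eq_singleton_iff] at hcompl

lemma gelfandMap_surjective : Function.Surjective (gelfandMap X 𝕜) := by
  intro M
  obtain ⟨x, hx⟩ := (ideal_isMaximal_iff M.asIdeal).mp M.isMaximal
  exact ⟨x, MaximalSpectrum.ext ((gelfandMap_asIdeal x).trans hx)⟩

lemma isClosedMap_gelfandMap : IsClosedMap (gelfandMap X 𝕜) := by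
  intro C hC
  have hpreimage : (MaximalSpectrum.toPrimeSpectrum ∘ gelfandMap X 𝕜) ⁻¹'
      zeroLocus (idealOfSet 𝕜 Cᶜ) = C := by
    rw [gelfandMap_preimage_zeroLocus, setOfIdeal_ofSet_of_isOpen 𝕜 hC.isOpen_compl,
      compl_compl]
  rw [← hpreimage, Set.preimage_comp, Set.image_preimage_eq _ gelfandMap_surjective]
  exact (isClosed_zeroLocus _).preimage continuous_induced_dom

end RCLike

theorem stmt_19_general (X : Type*) [TopologicalSpace X] [CompactSpace X] [T2Space X] :
    IsHomeomorph (gelfandMap X ℝ) :=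
  isHomeomorph_iff_continuous_isClosedMap_bijective.mpr
    ⟨continuous_gelfandMap, isClosedMap_gelfandMap, gelfandMap_injective, gelfandMap_surjective⟩

theorem stmt_19 (X : Type*) [TopologicalSpace X] [CompactSpace X] [T2Space X] [Nonempty X] :
    IsHomeomorph (gelfandMap X ℝ) :=
  stmt_19_general X
end
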